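/- Let Σ be an m×m real symmetric positive definite matrix, S a nonempty subset of {1,…,m}, and Π the m×|S| matrix whose columns are the standard basis vectors of ℝᵐ indexed by S (the coordinate inclusion). Then ΠᵀΣΠ = Σ_{S,S} is invertible, and for every u ∈ ℝᵐ, uᵀ Σ Π (ΠᵀΣΠ)⁻¹ Πᵀ Σ u = uᵀΣu − u_{Sᶜ}ᵀ Σ_{Sᶜ|S} u_{Sᶜ}. -/

import Mathlib

open Matrix

/-- The submatrix of `A` with rows indexed by `S` and columns indexed by `T`. -/
def blk {m : ℕ} (A : Matrix (Fin m) (Fin m) ℝ) (S T : Finset (Fin m)) :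
    Matrix ↥S ↥T ℝ :=
  Matrix.of fun i j => A i.val j.val

/-- The subvector of `u` with coordinates indexed by `S`. -/
def subvec {m : ℕ} (u : Fin m → ℝ) (S : Finset (Fin m)) : ↥S → ℝ :=
  fun i => u i.val

/-- The Schur complement `Σ_{Sᶜ|S} = Σ_{Sᶜ,Sᶜ} − Σ_{Sᶜ,S} Σ_{S,S}⁻¹ Σ_{S,Sᶜ}`. -/
noncomputable def schurCompl {m : ℕ} (A : Matrix (Fin m) (Fin m) ℝ) (S : Finset (Fin m)) :
    Matrix ↥Sᶜ ↥Sᶜ ℝ :=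
  blk A Sᶜ Sᶜ - blk A Sᶜ S * (blk A S S)⁻¹ * blk A S Sᶜ

/-- The `m × |S|` coordinate-inclusion matrix whose columns are the standard basis
vectors indexed by `S`. -/
def coordIncl {m : ℕ} (S : Finset (Fin m)) : Matrix (Fin m) ↥S ℝ :=
  Matrix.of fun i j => if i = j.val then 1 else 0

/-!
Ordering the coordinates as `S ⊕ Sᶜ` puts `Σ` in block form with upper-left block
`A = Σ_{S,S}` and upper-right block `B = Σ_{S,Sᶜ}`. Completing the square gives
`uᵀΣu = xᵀAx + u_{Sᶜ}ᵀ Σ_{Sᶜ|S} u_{Sᶜ}` with `x = u_S + A⁻¹B u_{Sᶜ}`, while `ΠᵀΣu = (Σu)_S = Ax`,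
so the heritability numerator is `(Ax)ᵀA⁻¹(Ax) = xᵀAx`.
-/

section BlockDecomposition

variable {m : ℕ} (S : Finset (Fin m))

def blockEquiv : ↥S ⊕ ↥Sᶜ ≃ Fin m :=
  (Equiv.sumCongr (Equiv.refl _) (Equiv.subtypeEquivRight fun _ => Finset.mem_compl)).trans
    (Equiv.sumCompl (· ∈ S))

lemma fromBlocks_blk (A : Matrix (Fin m) (Fin m) ℝ) :
    fromBlocks (blk A S S) (blk A S Sᶜ) (blk A Sᶜ S) (blk A Sᶜ Sᶜ) =
      A.submatrix (blockEquiv S) (blockEquiv S) := by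
  ext (i | i) (j | j) <;> rfl

lemma sumElim_subvec (u : Fin m → ℝ) :
    Sum.elim (subvec u S) (subvec u Sᶜ) = u ∘ blockEquiv S := by
  ext (i | i) <;> rfl

lemma dotProduct_mulVec_eq_fromBlocks (A : Matrix (Fin m) (Fin m) ℝ) (u : Fin m → ℝ) :
    u ⬝ᵥ A *ᵥ u = Sum.elim (subvec u S) (subvec u Sᶜ) ⬝ᵥ
      fromBlocks (blk A S S) (blk A S Sᶜ) (blk A Sᶜ S) (blk A Sᶜ Sᶜ) *ᵥ
        Sum.elim (subvec u S) (subvec u Sᶜ) := by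
  rw [fromBlocks_blk, sumElim_subvec, submatrix_mulVec_equiv, Function.comp_assoc,
    Equiv.self_comp_symm, Function.comp_id, ← comp_equiv_symm_dotProduct, Function.comp_assoc,
    Equiv.self_comp_symm, Function.comp_id]

lemma subvec_mulVec (A : Matrix (Fin m) (Fin m) ℝ) (T : Finset (Fin m)) (u : Fin m → ℝ) :
    subvec (A *ᵥ u) T = blk A T S *ᵥ subvec u S + blk A T Sᶜ *ᵥ subvec u Sᶜ := by
  funext i
  simp only [subvec, mulVec, dotProduct, blk, Pi.add_apply, of_apply]
  rw [Finset.sum_coe_sort S (fun k => A i k * u k), Finset.sum_coe_sort Sᶜ (fun k => A i k * u k),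
    Finset.sum_add_sum_compl]

lemma coordIncl_transpose_mulVec (x : Fin m → ℝ) : (coordIncl S)ᵀ *ᵥ x = subvec x S := by
  funext i
  simp [coordIncl, mulVec, dotProduct, subvec]

lemma coordIncl_transpose_mul_mul (A : Matrix (Fin m) (Fin m) ℝ) :
    (coordIncl S)ᵀ * A * coordIncl S = blk A S S := by
  ext i j
  simp [coordIncl, blk, Matrix.mul_apply]

lemma blk_conjTranspose {A : Matrix (Fin m) (Fin m) ℝ} (hA : A.IsHermitian) (T : Finset (Fin m)) :
    (blk A S T)ᴴ = blk A T S := by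
  ext i j
  exact congrFun (congrFun hA i.val) j.val

end BlockDecomposition

lemma dotProduct_transpose_mul_mul_mulVec {ι κ R : Type*} [Fintype ι] [Fintype κ] [CommRing R]
    (N : Matrix κ ι R) (M : Matrix κ κ R) (u : ι → R) :
    u ⬝ᵥ (Nᵀ * M * N) *ᵥ u = (N *ᵥ u) ⬝ᵥ M *ᵥ (N *ᵥ u) := by
  rw [← mulVec_mulVec, ← mulVec_mulVec, dotProduct_mulVec, vecMul_transpose]

section SchurComplement

variable {m : ℕ} (S : Finset (Fin m)) {A : Matrix (Fin m) (Fin m) ℝ}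

lemma dotProduct_mulVec_eq_add_schurCompl (hA : A.IsHermitian) (hdet : IsUnit (blk A S S).det)
    (u : Fin m → ℝ) :
    u ⬝ᵥ A *ᵥ u =
      (subvec u S + ((blk A S S)⁻¹ * blk A S Sᶜ) *ᵥ subvec u Sᶜ) ⬝ᵥ blk A S S *ᵥ
          (subvec u S + ((blk A S S)⁻¹ * blk A S Sᶜ) *ᵥ subvec u Sᶜ) +
        subvec u Sᶜ ⬝ᵥ schurCompl A S *ᵥ subvec u Sᶜ := by
  have := invertibleOfIsUnitDet _ hdet
  have h := schur_complement_eq₁₁ (blk A S Sᶜ) (blk A Sᶜ Sᶜ) (subvec u S) (subvec u Sᶜ)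
    (blk_conjTranspose S hA S)
  simp only [star_trivial, ← dotProduct_mulVec, blk_conjTranspose S hA Sᶜ] at h
  rw [dotProduct_mulVec_eq_fromBlocks S, h, schurCompl]

lemma subvec_mulVec_eq_blk_mulVec (hdet : IsUnit (blk A S S).det) (u : Fin m → ℝ) :
    subvec (A *ᵥ u) S =
      blk A S S *ᵥ (subvec u S + ((blk A S S)⁻¹ * blk A S Sᶜ) *ᵥ subvec u Sᶜ) := by
  rw [subvec_mulVec S, mulVec_add, mulVec_mulVec, mul_nonsing_inv_cancel_left _ _ hdet]

end SchurComplement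

theorem stmt_5_general {m : ℕ} (Sig : Matrix (Fin m) (Fin m) ℝ)
    (hSig : Sig.PosDef)
    (S : Finset (Fin m)) :
    (coordIncl S)ᵀ * Sig * coordIncl S = blk Sig S S ∧
    IsUnit ((coordIncl S)ᵀ * Sig * coordIncl S).det ∧
    ∀ u : Fin m → ℝ,
      u ⬝ᵥ (Sig * coordIncl S * ((coordIncl S)ᵀ * Sig * coordIncl S)⁻¹ *
          (coordIncl S)ᵀ * Sig) *ᵥ u =
        u ⬝ᵥ Sig *ᵥ u - subvec u Sᶜ ⬝ᵥ schurCompl Sig S *ᵥ subvec u Sᶜ := by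
  have hdet : IsUnit (blk Sig S S).det :=
    (isUnit_iff_isUnit_det _).mp (hSig.submatrix Subtype.val_injective).isUnit
  have hsymm : Sigᵀ = Sig := by
    simpa [conjTranspose_eq_transpose_of_trivial] using hSig.isHermitian.eq
  refine ⟨coordIncl_transpose_mul_mul S Sig, coordIncl_transpose_mul_mul S Sig ▸ hdet, fun u => ?_⟩
  have hfactor : Sig * coordIncl S * (blk Sig S S)⁻¹ * (coordIncl S)ᵀ * Sig =
      ((coordIncl S)ᵀ * Sig)ᵀ * (blk Sig S S)⁻¹ * ((coordIncl S)ᵀ * Sig) := by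
    rw [transpose_mul, transpose_transpose, hsymm, Matrix.mul_assoc _ _ Sig]
  rw [coordIncl_transpose_mul_mul, hfactor, dotProduct_transpose_mul_mul_mulVec, ← mulVec_mulVec,
    coordIncl_transpose_mulVec, subvec_mulVec_eq_blk_mulVec S hdet, mulVec_mulVec,
    nonsing_inv_mul _ hdet, one_mulVec, dotProduct_comm,
    dotProduct_mulVec_eq_add_schurCompl S hSig.isHermitian hdet, add_sub_cancel_right]

/-- Identity (cher4) of Lemma 1: for the coordinate inclusion `Π = Π_S`, the matrix
`ΠᵀΣΠ = Σ_{S,S}` is invertible, and the `C`-heritability numerator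
`uᵀΣΠ(ΠᵀΣΠ)⁻¹ΠᵀΣu` equals `uᵀΣu − u_{Sᶜ}ᵀ Σ_{Sᶜ|S} u_{Sᶜ}`. -/
theorem stmt_5 {m : ℕ} (Sig : Matrix (Fin m) (Fin m) ℝ)
    (hSigsym : Sig.IsSymm) (hSig : Sig.PosDef)
    (S : Finset (Fin m)) (hS : S.Nonempty) :
    (coordIncl S)ᵀ * Sig * coordIncl S = blk Sig S S ∧
    IsUnit ((coordIncl S)ᵀ * Sig * coordIncl S).det ∧
    ∀ u : Fin m → ℝ,
      u ⬝ᵥ (Sig * coordIncl S * ((coordIncl S)ᵀ * Sig * coordIncl S)⁻¹ *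
          (coordIncl S)ᵀ * Sig) *ᵥ u =
        u ⬝ᵥ Sig *ᵥ u - subvec u Sᶜ ⬝ᵥ schurCompl Sig S *ᵥ subvec u Sᶜ :=
  stmt_5_general Sig hSig S
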